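/- arXiv:2312.05884 — 6 statements merged into one kernel-verified Lean document; each statement's English description precedes it below -/
import Mathlib

section
/- Let M, N be natural numbers, let a, b, c, z be real numbers, let t = (2M+1)(2N+1), and define f(m,n) = -a·m - b·n + c·m² + z·n² for integers m, n. Assume sin(2πzs) ≠ 0 for every integer s with 1 ≤ s ≤ 2N and sin(2πcr) ≠ 0 for every integer r with 1 ≤ r ≤ 2M. Define I₂ = 2(2M+1)·∑_{s=1}^{2N} Φ(z,s,N)·cos(2πbs) and I₃ = 2(2N+1)·∑_{r=1}^{2M} Φ(c,r,M)·cos(2πar). Then the resolution Δ = (1/t²)·|∑_{m=-M}^{M} ∑_{n=-N}^{N} exp(2πi·f(m,n))|² satisfies Δ = (1/t²)·(t + I₂ + I₃ + I₂·I₃/t). -/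
/-!
The double sum factors as a product of two one-dimensional quadratic Gauss-type sums, so it
suffices to show `‖∑_{n=-N}^{N} e(-b n + z n²)‖² = 2N + 1 + 2 ∑_{s=1}^{2N} Φ(z,s,N) cos(2πbs)`,
where `e(x) = exp(2πix)`. Expanding the square and grouping the pairs `(n + s, n)` by their lag
`s`, the phase difference `-bs + zs(2n + s)` is linear in `n`, so each lag contributes
`e(-bs)` times a symmetric geometric sum `∑ exp(i(2n + s)θ)` with `θ = 2πzs`, which equals
`sin((2N - s + 1)θ) / sin θ = Φ(z,s,N)`. The lags `s` and `-s` are complex conjugate, which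
produces the cosine.
-/

open Real Finset

/-- `Φ(x, y, K) = sin(2πxy(2K − y + 1)) / sin(2πxy)`. -/
noncomputable def Phi (x : ℝ) (y : ℤ) (K : ℕ) : ℝ :=
  Real.sin (2 * π * x * y * (2 * K - y + 1)) / Real.sin (2 * π * x * y)

open ComplexConjugate

theorem Finset.sum_sum_eq_sum_diag_add_two_nsmul_sum_lt {ι M : Type*} [LinearOrder ι]
    [AddCommMonoid M] (s : Finset ι) (F : ι → ι → M) (hF : ∀ i j, F i j = F j i) :
    ∑ i ∈ s, ∑ j ∈ s, F i j = ∑ i ∈ s, F i i + 2 • ∑ i ∈ s, ∑ j ∈ s with j < i, F i j := by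
  have hsplit : ∀ i j, F i j = (if j < i then F i j else 0) + (if i = j then F i j else 0)
      + (if i < j then F i j else 0) := by
    intro i j
    rcases lt_trichotomy i j with hij | rfl | hij
    · simp [hij, hij.ne, hij.not_gt]
    · simp
    · simp [hij, hij.ne', hij.not_gt]
  have hupper : ∑ i ∈ s, ∑ j ∈ s, (if i < j then F i j else 0)
      = ∑ i ∈ s, ∑ j ∈ s, (if j < i then F i j else 0) := by
    rw [sum_comm]
    exact sum_congr rfl fun i _ => sum_congr rfl fun j _ => by rw [hF]
  conv_lhs => enter [2, i, 2, j]; rw [hsplit i j]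
  simp only [sum_add_distrib]
  rw [hupper]
  simp only [sum_ite_eq, ← sum_filter]
  rw [filter_mem_eq_inter, inter_self, two_nsmul]
  abel

theorem Int.sum_Icc_sum_lt_eq_sum_lag {M : Type*} [AddCommMonoid M] (a b : ℤ)
    (G : ℤ → ℤ → M) :
    ∑ i ∈ Icc a b, ∑ j ∈ Icc a b with j < i, G i j
      = ∑ s ∈ Icc 1 (b - a), ∑ n ∈ Icc a (b - s), G (n + s) n := by
  rw [sum_sigma', sum_sigma']
  refine sum_nbij' (fun p => ⟨p.1 - p.2, p.2⟩) (fun p => ⟨p.2 + p.1, p.2⟩) ?_ ?_ ?_ ?_ ?_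
  all_goals intro p hp; simp only [mem_sigma, mem_filter, mem_Icc] at hp ⊢
  · omega
  · omega
  all_goals simp

theorem Int.sum_Icc_sub {G : Type*} [AddCommGroup G] (h : ℤ → G) {a b : ℤ} (hab : a ≤ b + 1) :
    ∑ n ∈ Icc a b, (h (n + 1) - h n) = h (b + 1) - h a := by
  obtain ⟨c, rfl⟩ : ∃ c, b = c - 1 := ⟨b + 1, by ring⟩
  rw [sub_add_cancel] at hab ⊢
  induction c, hab using Int.leInduction with
  | base => simp
  | succ c hc ih =>
    rw [add_sub_cancel_right, ← sub_add_cancel c 1, ← insert_Icc_right_eq_Icc_add_one (by omega),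
      sum_insert (by simp), sub_add_cancel, ih]
    abel

theorem Complex.exp_mul_I_sub_exp_neg_mul_I (x : ℂ) :
    Complex.exp (x * I) - Complex.exp (-x * I) = 2 * I * Complex.sin x := by
  rw [mul_comm 2 I, mul_assoc, Complex.two_sin]
  linear_combination (Complex.exp (x * I) - Complex.exp (-x * I)) * Complex.I_sq

theorem Complex.sum_Icc_exp_eq_sin_div_sin {θ : ℝ} (hθ : Real.sin θ ≠ 0) {a b : ℤ}
    (hab : a ≤ b + 1) :
    ∑ n ∈ Icc a b, Complex.exp ((2 * n - a - b) * θ * I)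
      = (Real.sin ((b - a + 1) * θ) / Real.sin θ : ℝ) := by
  have hsin : (2 * I * Complex.sin θ) ≠ 0 := by
    simpa [Complex.I_ne_zero] using (Complex.ofReal_ne_zero.mpr hθ)
  have hstep : ∀ n : ℤ, Complex.exp ((2 * n - a - b) * θ * I) * (2 * I * Complex.sin θ)
      = Complex.exp ((2 * ((n + 1 : ℤ) : ℂ) - a - b - 1) * θ * I)
        - Complex.exp ((2 * (n : ℂ) - a - b - 1) * θ * I) := by
    intro n
    rw [← Complex.exp_mul_I_sub_exp_neg_mul_I, mul_sub, ← Complex.exp_add, ← Complex.exp_add]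
    push_cast
    ring_nf
  -- multiplying by `2i sin θ = exp(iθ) - exp(-iθ)` makes the sum telescope
  have htel := Int.sum_Icc_sub (fun m : ℤ => Complex.exp ((2 * (m : ℂ) - a - b - 1) * θ * I)) hab
  beta_reduce at htel
  rw [← mul_left_inj' hsin, sum_mul, sum_congr rfl fun n _ => hstep n, htel]
  push_cast
  rw [div_mul_eq_mul_div, mul_div_assoc, mul_div_cancel_right₀ _ (by exact_mod_cast hθ),
    mul_comm (Complex.sin _), ← Complex.exp_mul_I_sub_exp_neg_mul_I]
  congr 2 <;> ring

theorem Complex.sq_norm_sum_Icc_eq_sum_lag (w : ℤ → ℂ) (a b : ℤ) :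
    ‖∑ n ∈ Icc a b, w n‖ ^ 2 = ∑ n ∈ Icc a b, ‖w n‖ ^ 2
      + 2 * ∑ s ∈ Icc 1 (b - a), (∑ n ∈ Icc a (b - s), w (n + s) * conj (w n)).re := by
  have hsymm : ∀ i j, (w i * conj (w j)).re = (w j * conj (w i)).re := fun i j => by
    rw [← Complex.conj_re, map_mul, Complex.conj_conj, mul_comm]
  calc ‖∑ n ∈ Icc a b, w n‖ ^ 2
      = ((∑ n ∈ Icc a b, w n) * conj (∑ n ∈ Icc a b, w n)).re := by
        rw [Complex.mul_conj', ← Complex.ofReal_pow, Complex.ofReal_re]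
    _ = ∑ i ∈ Icc a b, ∑ j ∈ Icc a b, (w i * conj (w j)).re := by
        simp only [map_sum, sum_mul_sum, Complex.re_sum]
    _ = _ := by
        rw [sum_sum_eq_sum_diag_add_two_nsmul_sum_lt _ _ hsymm, Int.sum_Icc_sum_lt_eq_sum_lag,
          nsmul_eq_mul]
        simp only [Complex.mul_conj', ← Complex.ofReal_pow, Complex.ofReal_re, Complex.re_sum,
          Nat.cast_ofNat]

theorem sq_norm_sum_exp_quadratic (N : ℕ) (b z : ℝ)
    (hz : ∀ s : ℤ, 1 ≤ s → s ≤ 2 * N → Real.sin (2 * π * z * s) ≠ 0) :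
    ‖∑ n ∈ Icc (-(N : ℤ)) N, Complex.exp (2 * π * Complex.I * ((-b * n + z * n ^ 2 : ℝ) : ℂ))‖ ^ 2
      = 2 * N + 1 + 2 * ∑ s ∈ Icc (1 : ℤ) (2 * N), Phi z s N * Real.cos (2 * π * b * s) := by
  set w : ℤ → ℂ := fun n => Complex.exp (2 * π * Complex.I * ((-b * n + z * n ^ 2 : ℝ) : ℂ))
  have hlag : ∀ s ∈ Icc (1 : ℤ) (2 * N),
      (∑ n ∈ Icc (-(N : ℤ)) (N - s), w (n + s) * conj (w n)).re
        = Phi z s N * Real.cos (2 * π * b * s) := by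
    intro s hs
    rw [mem_Icc] at hs
    have hterm : ∀ n : ℤ, w (n + s) * conj (w n)
        = Complex.exp ((-(2 * π * b * s) : ℝ) * Complex.I)
          * Complex.exp ((2 * n - ((-N : ℤ) : ℂ) - ((N - s : ℤ) : ℂ)) * ((2 * π * z * s : ℝ) : ℂ)
            * Complex.I) := fun n => by
      simp only [w, ← Complex.exp_conj, ← Complex.exp_add, map_mul, Complex.conj_ofReal,
        Complex.conj_I, map_ofNat]
      congr 1
      push_cast
      ring
    rw [sum_congr rfl fun n _ => hterm n, ← mul_sum,
      Complex.sum_Icc_exp_eq_sin_div_sin (hz s hs.1 hs.2) (by omega), mul_comm,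
      Complex.re_ofReal_mul, Complex.exp_ofReal_mul_I_re, Real.cos_neg, Phi]
    congr 3
    push_cast
    ring
  rw [Complex.sq_norm_sum_Icc_eq_sum_lag, show (N : ℤ) - -(N : ℤ) = 2 * N by ring,
    sum_congr rfl hlag]
  have hnorm : ∀ x : ℝ, ‖Complex.exp (2 * π * Complex.I * x)‖ = 1 := fun x => by
    rw [show 2 * π * Complex.I * x = ((2 * π * x : ℝ) : ℂ) * Complex.I by push_cast; ring]
    exact Complex.norm_exp_ofReal_mul_I _
  have hcard : (#(Icc (-(N : ℤ)) N) : ℤ) = 2 * N + 1 := by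
    rw [Int.card_Icc_of_le _ _ (by omega)]
    ring
  simp only [hnorm, one_pow, sum_const, nsmul_eq_mul, mul_one]
  congr 2
  exact_mod_cast hcard

theorem resolution_closed_form (M N : ℕ) (a b c z : ℝ)
    (hz : ∀ s : ℤ, 1 ≤ s → s ≤ 2 * N → Real.sin (2 * π * z * s) ≠ 0)
    (hc : ∀ r : ℤ, 1 ≤ r → r ≤ 2 * M → Real.sin (2 * π * c * r) ≠ 0)
    (t : ℝ) (ht : t = (2 * M + 1) * (2 * N + 1))
    (f : ℤ → ℤ → ℝ)
    (hf : ∀ m n : ℤ, f m n = -a * m - b * n + c * m ^ 2 + z * n ^ 2)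
    (I₂ I₃ Δ : ℝ)
    (hI₂ : I₂ = 2 * (2 * M + 1) *
      ∑ s ∈ Finset.Icc (1 : ℤ) (2 * N), Phi z s N * Real.cos (2 * π * b * s))
    (hI₃ : I₃ = 2 * (2 * N + 1) *
      ∑ r ∈ Finset.Icc (1 : ℤ) (2 * M), Phi c r M * Real.cos (2 * π * a * r))
    (hΔ : Δ = (1 / t ^ 2) *
      ‖(∑ m ∈ Finset.Icc (-(M : ℤ)) M, ∑ n ∈ Finset.Icc (-(N : ℤ)) N,
        Complex.exp (2 * π * Complex.I * (f m n)))‖ ^ 2) :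
    Δ = (1 / t ^ 2) * (t + I₂ + I₃ + I₂ * I₃ / t) := by
  have hfactor : ∑ m ∈ Icc (-(M : ℤ)) M, ∑ n ∈ Icc (-(N : ℤ)) N,
        Complex.exp (2 * π * Complex.I * (f m n))
      = (∑ m ∈ Icc (-(M : ℤ)) M,
          Complex.exp (2 * π * Complex.I * ((-a * m + c * m ^ 2 : ℝ) : ℂ)))
        * ∑ n ∈ Icc (-(N : ℤ)) N,
          Complex.exp (2 * π * Complex.I * ((-b * n + z * n ^ 2 : ℝ) : ℂ)) := by
    rw [sum_mul_sum]
    refine sum_congr rfl fun m _ => sum_congr rfl fun n _ => ?_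
    rw [← Complex.exp_add, hf]
    push_cast
    ring_nf
  rw [hΔ, hfactor, norm_mul, mul_pow, sq_norm_sum_exp_quadratic M a c hc,
    sq_norm_sum_exp_quadratic N b z hz, hI₂, hI₃, ht]
  field_simp
  ring
end

section
/- Let M, N be natural numbers, let a, b, c, z be real numbers with sin(2πzs) ≠ 0 for every integer s with 1 ≤ s ≤ 2N, and define f(m,n) = -a·m - b·n + c·m² + z·n² for integers m, n. Then ∑_{s=1}^{2N} ∑_{m=-M}^{M} ∑_{n=-N}^{N-s} [exp(2πi·(f(m,n+s) − f(m,n))) + exp(2πi·(f(m,n) − f(m,n+s)))] = 2(2M+1)·∑_{s=1}^{2N} Φ(z,s,N)·cos(2πbs). -/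
open Real Finset

/-! The two exponentials of a pair combine to `2 cos (2π (f(m, n+s) − f(m, n)))`, and the phase
difference `z s (2n + s) − b s` does not depend on `m`, so the sum over `m` only contributes the
factor `2M + 1`. The sum over `n` runs over an arithmetic progression of phases symmetric about
`−2π b s`, and the Dirichlet-kernel identity `Real.sin_mul_sum_cos` evaluates it to
`Φ(z, s, N) cos (2π b s)`. -/

theorem Real.sin_mul_sum_Icc_cos (u B : ℝ) (N : ℕ) {s : ℤ} (hs : s ≤ 2 * N + 1) :
    sin u * ∑ n ∈ Icc (-(N : ℤ)) (N - s), cos (u * (2 * n + s) - B) =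
      sin (u * (2 * N - s + 1)) * cos B := by
  set L := (N - s + 1 - -(N : ℤ)).toNat
  have hL : (L : ℝ) = 2 * N - s + 1 := by
    have : (L : ℤ) = 2 * N - s + 1 := by omega
    exact_mod_cast this
  rw [Int.Icc_eq_finset_map, sum_map]
  simp only [Function.Embedding.trans_apply, Nat.castEmbedding_apply, addLeftEmbedding_apply]
  convert Real.sin_mul_sum_cos L (2 * u) (u * (s - 2 * N) - B) using 2
  · ring_nf
  · refine sum_congr rfl fun i _ => ?_
    push_cast
    ring_nf
  · rw [hL]
    ring_nf
  · rw [hL, ← cos_neg]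
    ring_nf

theorem sum_Icc_cos_eq_Phi_mul_cos (z b : ℝ) (N : ℕ) {s : ℤ} (hs : s ≤ 2 * N + 1)
    (hsin : sin (2 * π * z * s) ≠ 0) :
    ∑ n ∈ Icc (-(N : ℤ)) (N - s), cos (2 * π * z * s * (2 * n + s) - 2 * π * b * s) =
      Phi z s N * cos (2 * π * b * s) := by
  rw [Phi, div_mul_eq_mul_div, eq_div_iff hsin, mul_comm,
    Real.sin_mul_sum_Icc_cos _ _ _ hs, mul_assoc]

theorem Complex.exp_two_pi_I_sub_add_exp_two_pi_I_sub (x y : ℝ) :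
    Complex.exp (2 * π * Complex.I * (x - y)) + Complex.exp (2 * π * Complex.I * (y - x)) =
      ↑(2 * Real.cos (2 * π * (x - y))) := by
  push_cast
  rw [Complex.two_cos]
  congr 2 <;> ring

theorem I2_paired_sum (M N : ℕ) (a b c z : ℝ)
    (hz : ∀ s : ℤ, 1 ≤ s → s ≤ 2 * N → Real.sin (2 * π * z * s) ≠ 0)
    (f : ℤ → ℤ → ℝ)
    (hf : ∀ m n : ℤ, f m n = -a * m - b * n + c * m ^ 2 + z * n ^ 2) :
    ∑ s ∈ Finset.Icc (1 : ℤ) (2 * N), ∑ m ∈ Finset.Icc (-(M : ℤ)) M,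
        ∑ n ∈ Finset.Icc (-(N : ℤ)) (N - s),
          (Complex.exp (2 * π * Complex.I * (f m (n + s) - f m n)) +
            Complex.exp (2 * π * Complex.I * (f m n - f m (n + s)))) =
      ((2 * (2 * M + 1) *
        ∑ s ∈ Finset.Icc (1 : ℤ) (2 * N), Phi z s N * Real.cos (2 * π * b * s) : ℝ) : ℂ) := by
  have hphase : ∀ m n s : ℤ,
      2 * π * (f m (n + s) - f m n) = 2 * π * z * s * (2 * n + s) - 2 * π * b * s := by
    intro m n s
    rw [hf, hf]
    push_cast
    ring
  have hrow : ∀ s ∈ Icc (1 : ℤ) (2 * N), ∀ m : ℤ,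
      ∑ n ∈ Icc (-(N : ℤ)) (N - s),
          (Complex.exp (2 * π * Complex.I * (f m (n + s) - f m n)) +
            Complex.exp (2 * π * Complex.I * (f m n - f m (n + s)))) =
        ((2 * (Phi z s N * Real.cos (2 * π * b * s)) : ℝ) : ℂ) := by
    intro s hs m
    obtain ⟨hs1, hs2⟩ := mem_Icc.mp hs
    simp_rw [Complex.exp_two_pi_I_sub_add_exp_two_pi_I_sub, hphase, ← Complex.ofReal_sum,
      ← mul_sum, sum_Icc_cos_eq_Phi_mul_cos z b N (by omega) (hz s hs1 hs2)]
  rw [sum_congr rfl fun s hs => sum_congr rfl fun m _ => hrow s hs m]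
  have hcard : ((Icc (-(M : ℤ)) M).card : ℂ) = ((2 * M + 1 : ℝ) : ℂ) := by
    rw [Int.card_Icc, show (M + 1 - -(M : ℤ)).toNat = 2 * M + 1 by omega]
    push_cast
    ring
  simp only [sum_const, nsmul_eq_mul, hcard, ← Complex.ofReal_mul, ← Complex.ofReal_sum, mul_sum]
  congr 1
  exact sum_congr rfl fun s _ => by ring
end

section
/- Let M, N be natural numbers, let a, b, c, z be real numbers, and let r, s be integers with 1 ≤ r ≤ 2M, 1 ≤ s ≤ 2N, sin(2πcr) ≠ 0, and sin(2πzs) ≠ 0. Then ∑_{m=-M}^{M-r} ∑_{n=-N}^{N-s} cos(2π·(-a·r − b·s + c·(r² + 2mr) + z·(s² + 2ns))) = Φ(c,r,M)·Φ(z,s,N)·cos(2π(ar + bs)). -/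
/-!
Multiplying a sum of cosines in arithmetic progression `θ + kβ` by `2 sin(β/2)` makes it
telescope, since `2 sin(β/2) cos(θ + kβ) = sin(θ + (k + ½)β) − sin(θ + (k − ½)β)`.
Over `k ∈ [−K, K − y]` with `β = 4πxy` the progression is centred at `k = −y/2`, where the
phase `2πx(y² + 2ky)` vanishes, so the sum is `Φ(x, y, K) cos θ`. The double sum factors:
summing over `n` gives `Φ(z, s, N)`, then summing over `m` gives `Φ(c, r, M) cos(2π(ar + bs))`.
-/

open Real Finset

theorem sin_add_half_sub_sin_sub_half (θ β x : ℝ) :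
    sin (θ + (x + 1 / 2) * β) - sin (θ + (x - 1 / 2) * β) = 2 * sin (β / 2) * cos (θ + x * β) := by
  rw [sin_sub_sin]
  ring_nf

theorem two_mul_sin_half_mul_sum_Icc_cos (θ β : ℝ) {lo hi : ℤ} (h : lo ≤ hi + 1) :
    2 * sin (β / 2) * ∑ k ∈ Icc lo hi, cos (θ + k * β) =
      sin (θ + (hi + 1 / 2) * β) - sin (θ + (lo - 1 / 2) * β) := by
  induction hi, (show lo - 1 ≤ hi by omega) using Int.leInduction with
  | base =>
    rw [Icc_eq_empty (by omega), sum_empty]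
    push_cast
    ring_nf
  | succ hi hle ih =>
    rw [← Finset.insert_Icc_right_eq_Icc_add_one (by omega), sum_insert (by simp), mul_add,
      ih (by omega), ← sin_add_half_sub_sin_sub_half]
    push_cast
    ring_nf

theorem sum_Icc_cos_eq_Phi_mul_cos_s5 (x θ : ℝ) {y : ℤ} {K : ℕ} (hy : y ≤ 2 * K)
    (hx : sin (2 * π * x * y) ≠ 0) :
    ∑ k ∈ Icc (-(K : ℤ)) (K - y), cos (θ + 2 * π * x * ((y : ℝ) ^ 2 + 2 * k * y)) =
      Phi x y K * cos θ := by
  have htel := two_mul_sin_half_mul_sum_Icc_cos (θ + 2 * π * x * y ^ 2) (4 * π * x * y)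
    (lo := -K) (hi := K - y) (by omega)
  rw [show 4 * π * x * y / 2 = 2 * π * x * y by ring, sin_sub_sin] at htel
  refine mul_left_cancel₀ (mul_ne_zero two_ne_zero hx) ?_
  calc 2 * sin (2 * π * x * y) * ∑ k ∈ Icc (-(K : ℤ)) (K - y),
        cos (θ + 2 * π * x * ((y : ℝ) ^ 2 + 2 * k * y))
      = 2 * sin (2 * π * x * y) * ∑ k ∈ Icc (-(K : ℤ)) (K - y),
          cos (θ + 2 * π * x * y ^ 2 + k * (4 * π * x * y)) := by
        congr! 3 with k; ring
    _ = 2 * sin (2 * π * x * y * (2 * K - y + 1)) * cos θ := by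
        rw [htel]
        push_cast
        ring_nf
    _ = 2 * sin (2 * π * x * y) * (Phi x y K * cos θ) := by
        rw [Phi]
        field_simp

theorem inner_sum_I4_general (M N : ℕ) (a b c z : ℝ) (r s : ℤ)
    (hr2 : r ≤ 2 * M) (hs2 : s ≤ 2 * N)
    (hc : Real.sin (2 * π * c * r) ≠ 0) (hz : Real.sin (2 * π * z * s) ≠ 0) :
    ∑ m ∈ Finset.Icc (-(M : ℤ)) (M - r), ∑ n ∈ Finset.Icc (-(N : ℤ)) (N - s),
        Real.cos (2 * π * (-a * r - b * s + c * ((r : ℝ) ^ 2 + 2 * m * r)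
          + z * ((s : ℝ) ^ 2 + 2 * n * s))) =
      Phi c r M * Phi z s N * Real.cos (2 * π * (a * r + b * s)) := by
  calc _ = ∑ m ∈ Icc (-(M : ℤ)) (M - r), ∑ n ∈ Icc (-(N : ℤ)) (N - s),
          cos ((-(2 * π * (a * r + b * s)) + 2 * π * c * ((r : ℝ) ^ 2 + 2 * m * r))
            + 2 * π * z * ((s : ℝ) ^ 2 + 2 * n * s)) := by
        congr! 3 with m _ n; ring
    _ = Phi z s N * ∑ m ∈ Icc (-(M : ℤ)) (M - r),
          cos (-(2 * π * (a * r + b * s)) + 2 * π * c * ((r : ℝ) ^ 2 + 2 * m * r)) := by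
        simp only [sum_Icc_cos_eq_Phi_mul_cos_s5 _ _ hs2 hz, mul_sum]
    _ = _ := by
        rw [sum_Icc_cos_eq_Phi_mul_cos_s5 _ _ hr2 hc, cos_neg]
        ring

theorem inner_sum_I4 (M N : ℕ) (a b c z : ℝ) (r s : ℤ)
    (hr1 : 1 ≤ r) (hr2 : r ≤ 2 * M) (hs1 : 1 ≤ s) (hs2 : s ≤ 2 * N)
    (hc : Real.sin (2 * π * c * r) ≠ 0) (hz : Real.sin (2 * π * z * s) ≠ 0) :
    ∑ m ∈ Finset.Icc (-(M : ℤ)) (M - r), ∑ n ∈ Finset.Icc (-(N : ℤ)) (N - s),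
        Real.cos (2 * π * (-a * r - b * s + c * ((r : ℝ) ^ 2 + 2 * m * r)
          + z * ((s : ℝ) ^ 2 + 2 * n * s))) =
      Phi c r M * Phi z s N * Real.cos (2 * π * (a * r + b * s)) :=
  inner_sum_I4_general M N a b c z r s hr2 hs2 hc hz
end

section
/- Let M, N be natural numbers, let a, b, c, z be real numbers, and let r, s be integers with 1 ≤ r ≤ 2M, 1 ≤ s ≤ 2N, sin(2πcr) ≠ 0, and sin(2πzs) ≠ 0. Then ∑_{m=-M}^{M-r} ∑_{n=-N+s}^{N} cos(2π·(-a·r + b·s + c·(r² + 2mr) + z·(s² − 2ns))) = Φ(c,r,M)·Φ(z,s,N)·cos(2π(ar − bs)). -/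
/-!
For fixed `m` the phase is affine in `n` with slope `-2zs`, and for fixed `n` affine in `m` with
slope `2cr`, so the double sum is an iterated sum of cosines along arithmetic progressions.
Multiplying such a sum by `sin (x / 2)` makes it telescope (Lagrange's identity), which yields
`Φ` times the cosine at the midpoint of the range; doing this first in `n`, then in `m`, leaves
the phase `-2π (a r - b s)`.
-/

open Real Finset

theorem Int.sum_Icc_sub_s6 {M : Type*} [AddCommGroup M] (f : ℤ → M) {p q : ℤ} (h : p ≤ q + 1) :
    ∑ k ∈ Icc p q, (f (k + 1) - f k) = f (q + 1) - f p := by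
  induction q, (show p - 1 ≤ q by omega) using Int.leInduction with
  | base => simp
  | succ q _ ih =>
    rw [← insert_Icc_right_eq_Icc_add_one (by omega), sum_insert (by simp), ih (by omega)]
    abel

theorem sin_half_mul_sum_Icc_cos (B x : ℝ) {p q : ℤ} (h : p ≤ q + 1) :
    sin (x / 2) * ∑ k ∈ Icc p q, cos (B + k * x) =
      sin ((q - p + 1) * x / 2) * cos (B + (p + q) * x / 2) := by
  have telescope := Int.sum_Icc_sub_s6 (fun k : ℤ => sin (B + (k - 1 / 2) * x)) h
  have hterm (k : ℤ) : sin (B + ((k + 1 : ℤ) - 1 / 2) * x) - sin (B + (k - 1 / 2) * x) =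
      2 * (sin (x / 2) * cos (B + k * x)) := by
    rw [sin_sub_sin]
    push_cast
    ring_nf
  have hends : sin (B + ((q + 1 : ℤ) - 1 / 2) * x) - sin (B + (p - 1 / 2) * x) =
      2 * (sin ((q - p + 1) * x / 2) * cos (B + (p + q) * x / 2)) := by
    rw [sin_sub_sin]
    push_cast
    ring_nf
  simp only [hterm, hends, ← mul_sum] at telescope
  linarith

theorem sum_Icc_cos_eq_Phi (B x : ℝ) (y : ℤ) (K : ℕ) (hy : y ≤ 2 * K + 1)
    (hxy : sin (2 * π * x * y) ≠ 0) :
    ∑ k ∈ Icc (-(K : ℤ)) (K - y), cos (B + k * (4 * π * x * y)) =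
      Phi x y K * cos (B - 2 * π * x * y ^ 2) := by
  have h := sin_half_mul_sum_Icc_cos B (4 * π * x * y) (p := -(K : ℤ)) (q := K - y) (by omega)
  rw [Phi, div_mul_eq_mul_div, eq_div_iff hxy]
  push_cast at h
  ring_nf at h ⊢
  linear_combination h

theorem sum_Icc_cos_sub_eq_Phi (B x : ℝ) (y : ℤ) (K : ℕ) (hy : y ≤ 2 * K + 1)
    (hxy : sin (2 * π * x * y) ≠ 0) :
    ∑ k ∈ Icc (-(K : ℤ) + y) K, cos (B - k * (4 * π * x * y)) =
      Phi x y K * cos (B - 2 * π * x * y ^ 2) := by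
  have h := sin_half_mul_sum_Icc_cos B (-(4 * π * x * y)) (p := -(K : ℤ) + y) (q := K) (by omega)
  rw [Phi, div_mul_eq_mul_div, eq_div_iff hxy]
  rw [show ((K : ℤ) - (-(K : ℤ) + y : ℤ) + 1 : ℝ) * -(4 * π * x * y) / 2 =
      -(2 * π * x * y * (2 * K - y + 1)) by push_cast; ring,
    show -(4 * π * x * y) / 2 = -(2 * π * x * y) by ring, sin_neg, sin_neg] at h
  simp only [mul_neg, ← sub_eq_add_neg] at h
  push_cast at h
  ring_nf at h ⊢
  linear_combination -h

theorem inner_sum_I5_general (M N : ℕ) (a b c z : ℝ) (r s : ℤ)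
    (hr2 : r ≤ 2 * M) (hs2 : s ≤ 2 * N)
    (hc : Real.sin (2 * π * c * r) ≠ 0) (hz : Real.sin (2 * π * z * s) ≠ 0) :
    ∑ m ∈ Finset.Icc (-(M : ℤ)) (M - r), ∑ n ∈ Finset.Icc (-(N : ℤ) + s) (N : ℤ),
        Real.cos (2 * π * (-a * r + b * s + c * ((r : ℝ) ^ 2 + 2 * m * r)
          + z * ((s : ℝ) ^ 2 - 2 * n * s))) =
      Phi c r M * Phi z s N * Real.cos (2 * π * (a * r - b * s)) := by
  have inner (m : ℤ) : ∑ n ∈ Icc (-(N : ℤ) + s) N,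
      cos (2 * π * (-a * r + b * s + c * ((r : ℝ) ^ 2 + 2 * m * r) + z * ((s : ℝ) ^ 2 - 2 * n * s))) =
      Phi z s N * cos (2 * π * (-a * r + b * s + c * r ^ 2) + m * (4 * π * c * r)) := by
    convert sum_Icc_cos_sub_eq_Phi (2 * π * (-a * r + b * s + c * r ^ 2 + z * s ^ 2)
      + m * (4 * π * c * r)) z s N (by omega) hz using 3 <;> ring_nf
  rw [sum_congr rfl fun m _ => inner m, ← mul_sum,
    sum_Icc_cos_eq_Phi _ c r M (by omega) hc, ← cos_neg]
  ring_nf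

theorem inner_sum_I5 (M N : ℕ) (a b c z : ℝ) (r s : ℤ)
    (hr1 : 1 ≤ r) (hr2 : r ≤ 2 * M) (hs1 : 1 ≤ s) (hs2 : s ≤ 2 * N)
    (hc : Real.sin (2 * π * c * r) ≠ 0) (hz : Real.sin (2 * π * z * s) ≠ 0) :
    ∑ m ∈ Finset.Icc (-(M : ℤ)) (M - r), ∑ n ∈ Finset.Icc (-(N : ℤ) + s) (N : ℤ),
        Real.cos (2 * π * (-a * r + b * s + c * ((r : ℝ) ^ 2 + 2 * m * r)
          + z * ((s : ℝ) ^ 2 - 2 * n * s))) =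
      Phi c r M * Phi z s N * Real.cos (2 * π * (a * r - b * s)) :=
  inner_sum_I5_general M N a b c z r s hr2 hs2 hc hz
end

section
/- Let N be a natural number and let b be a real number with sin(πb) ≠ 0. Then ∑_{s=1}^{2N} (2N − s + 1)·cos(2πbs) ≤ 1/(2·sin²(πb)). -/
open Real Finset

/-!
With `z = exp (2πib)`, expanding `‖∑_{n=0}^{2N} zⁿ‖²` gives `2N + 1` plus twice the
weighted cosine sum (the Fejér kernel identity), while the geometric-sum formula bounds it by
`4 / ‖z - 1‖² = 1 / sin²(πb)`.
-/

namespace Complex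

theorem sq_norm_geom_sum_succ_of_norm_eq_one {z : ℂ} (hz : ‖z‖ = 1) (M : ℕ) :
    ‖∑ n ∈ range (M + 1), z ^ n‖ ^ 2 =
      M + 1 + 2 * ∑ j ∈ range M, ((M : ℝ) - j) * (z ^ (j + 1)).re := by
  induction M with
  | zero => simp
  | succ M ih =>
    have hre :
        (z * ∑ n ∈ range (M + 1), z ^ n).re = ∑ j ∈ range (M + 1), (z ^ (j + 1)).re := by
      simp only [mul_sum, ← pow_succ', re_sum]
    have hpad : ∑ j ∈ range M, ((M : ℝ) - j) * (z ^ (j + 1)).re =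
        ∑ j ∈ range (M + 1), ((M : ℝ) - j) * (z ^ (j + 1)).re := by
      rw [sum_range_succ, sub_self, zero_mul, add_zero]
    rw [geom_sum_succ, ← normSq_eq_norm_sq, normSq_add, normSq_mul, map_one, map_one, mul_one,
      normSq_eq_norm_sq, normSq_eq_norm_sq, ih, hz, one_pow, one_mul, hre, hpad]
    push_cast
    simp only [add_sub_right_comm _ (1 : ℝ), add_mul, one_mul, sum_add_distrib]
    ring

theorem norm_geom_sum_le_of_norm_le_one {z : ℂ} (hz : ‖z‖ ≤ 1) (hz1 : z ≠ 1) (M : ℕ) :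
    ‖∑ n ∈ range M, z ^ n‖ ≤ 2 / ‖z - 1‖ := by
  rw [geom_sum_eq hz1, norm_div]
  gcongr
  calc ‖z ^ M - 1‖ ≤ ‖z‖ ^ M + ‖(1 : ℂ)‖ := by rw [← norm_pow]; exact norm_sub_le _ _
    _ ≤ 2 := by rw [norm_one]; linarith [pow_le_one₀ (norm_nonneg z) hz (n := M)]

theorem exp_I_mul_ofReal_pow_re (x : ℝ) (n : ℕ) : (exp (I * x) ^ n).re = Real.cos (x * n) := by
  rw [← exp_nat_mul, show (n : ℂ) * (I * x) = ((x * n : ℝ) : ℂ) * I by push_cast; ring,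
    exp_ofReal_mul_I_re]

end Complex

theorem weighted_cos_sum_le (N : ℕ) (b : ℝ) (hb : Real.sin (π * b) ≠ 0) :
    ∑ s ∈ Finset.Icc 1 (2 * N), (2 * (N : ℝ) - s + 1) * Real.cos (2 * π * b * s) ≤
      1 / (2 * Real.sin (π * b) ^ 2) := by
  set z := Complex.exp (Complex.I * (2 * π * b : ℝ))
  have hz : ‖z‖ = 1 := Complex.norm_exp_I_mul_ofReal _
  have hz_sub_one : ‖z - 1‖ = 2 * |Real.sin (π * b)| := by
    rw [Complex.norm_exp_I_mul_ofReal_sub_one, norm_mul, Real.norm_two, Real.norm_eq_abs]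
    ring_nf
  have hz_ne_one : z ≠ 1 := by
    rw [← sub_ne_zero, ← norm_ne_zero_iff, hz_sub_one]; positivity
  have hsum : ∑ s ∈ Icc 1 (2 * N), (2 * (N : ℝ) - s + 1) * Real.cos (2 * π * b * s) =
      ∑ j ∈ range (2 * N), (((2 * N : ℕ) : ℝ) - j) * (z ^ (j + 1)).re := by
    rw [← Ico_add_one_right_eq_Icc, sum_Ico_eq_sum_range, Nat.add_sub_cancel]
    refine sum_congr rfl fun j _ => ?_
    rw [Complex.exp_I_mul_ofReal_pow_re]
    push_cast; ring_nf
  have hD : ‖∑ n ∈ range (2 * N + 1), z ^ n‖ ^ 2 ≤ 1 / Real.sin (π * b) ^ 2 := by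
    calc _ ≤ (2 / ‖z - 1‖) ^ 2 := by
          gcongr; exact Complex.norm_geom_sum_le_of_norm_le_one hz.le hz_ne_one _
      _ = 1 / Real.sin (π * b) ^ 2 := by
          rw [hz_sub_one, div_pow, mul_pow, sq_abs]; field_simp
  rw [Complex.sq_norm_geom_sum_succ_of_norm_eq_one hz, ← hsum] at hD
  have hN : (0 : ℝ) ≤ ((2 * N : ℕ) : ℝ) := Nat.cast_nonneg _
  calc _ ≤ (1 / Real.sin (π * b) ^ 2) / 2 := by linarith
    _ = 1 / (2 * Real.sin (π * b) ^ 2) := by ring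
end

section
/- Let M, N be natural numbers and let a, b be real numbers with sin(πa) ≠ 0 and sin(πb) ≠ 0. Then the far-field (c = z = 0) uniform-planar-array resolution Δ = (1/((2M+1)(2N+1))²)·|∑_{m=-M}^{M} ∑_{n=-N}^{N} exp(2πi·(-a·m − b·n))|² satisfies Δ = sin²((2M+1)πa)·sin²((2N+1)πb)/((2M+1)²·(2N+1)²·sin²(πa)·sin²(πb)) ≤ 1/((2M+1)²·(2N+1)²·sin²(πa)·sin²(πb)); consequently Δ tends to 0 as min(M, N) tends to infinity. -/
open Real Finset Filter

/-!
The planar array factor is the product of two one-dimensional Dirichlet kernels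
`∑_{|m| ≤ M} e^{2πixm} = sin((2M+1)πx) / sin(πx)`, which follow by induction on `M` from
`2 cos(2πx(M+1)) sin(πx) = sin((2M+3)πx) - sin((2M+1)πx)`. Since `sin² ≤ 1`, the resolution is at most
`1 / ((2M+1)²(2N+1)² sin²(πa) sin²(πb))`, and this bound tends to `0` as `min M N → ∞`.
-/

theorem sum_exp_Icc_mul_sin (x : ℂ) (M : ℕ) :
    (∑ m ∈ Icc (-(M : ℤ)) M, Complex.exp (2 * π * Complex.I * (x * m))) * Complex.sin (π * x) =
      Complex.sin ((2 * M + 1) * π * x) := by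
  induction M with
  | zero => simp
  | succ M ih =>
    have endpoints : Complex.exp (2 * π * Complex.I * (x * (M + 1 : ℤ))) +
        Complex.exp (2 * π * Complex.I * (x * (-(M + 1) : ℤ))) =
          2 * Complex.cos (2 * π * x * (M + 1)) := by
      rw [Complex.two_cos]
      congr 2 <;> push_cast <;> ring
    rw [Nat.cast_succ, sum_Icc_succ_eq_add_endpoints, add_mul, endpoints, ih]
    push_cast
    rw [show (2 * M + 1) * π * x = 2 * π * x * (M + 1) - π * x by ring,
      show (2 * (M + 1) + 1) * π * x = 2 * π * x * (M + 1) + π * x by ring,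
      Complex.sin_add, Complex.sin_sub]
    ring

theorem sum_exp_Icc_eq_sin_div_sin (x : ℝ) (hx : Real.sin (π * x) ≠ 0) (M : ℕ) :
    ∑ m ∈ Icc (-(M : ℤ)) M, Complex.exp (2 * π * Complex.I * (-x * m)) =
      ((Real.sin ((2 * M + 1) * π * x) / Real.sin (π * x) : ℝ) : ℂ) := by
  have h := sum_exp_Icc_mul_sin (-x) M
  simp only [mul_neg, Complex.sin_neg, neg_inj] at h
  push_cast
  rw [eq_div_iff (by exact_mod_cast hx)]
  exact h

theorem upa_array_factor_eq (a b : ℝ) (ha : Real.sin (π * a) ≠ 0) (hb : Real.sin (π * b) ≠ 0)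
    (M N : ℕ) :
    ∑ m ∈ Icc (-(M : ℤ)) M, ∑ n ∈ Icc (-(N : ℤ)) N,
        Complex.exp (2 * π * Complex.I * (-a * m - b * n)) =
      ((Real.sin ((2 * M + 1) * π * a) / Real.sin (π * a) *
        (Real.sin ((2 * N + 1) * π * b) / Real.sin (π * b)) : ℝ) : ℂ) := by
  simp_rw [sub_eq_add_neg, mul_add, Complex.exp_add, ← neg_mul, ← sum_mul_sum]
  rw [sum_exp_Icc_eq_sin_div_sin a ha, sum_exp_Icc_eq_sin_div_sin b hb, Complex.ofReal_mul]

theorem tendsto_odd_mul_odd_comap_min :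
    Tendsto (fun p : ℕ × ℕ => (2 * (p.1 : ℝ) + 1) * (2 * p.2 + 1))
      (comap (fun p : ℕ × ℕ => min p.1 p.2) atTop) atTop := by
  refine tendsto_atTop_mono (fun p => ?_) (tendsto_natCast_atTop_atTop.comp tendsto_comap)
  have h₁ : ((min p.1 p.2 : ℕ) : ℝ) ≤ p.1 := by exact_mod_cast min_le_left _ _
  have h₂ : (0 : ℝ) ≤ p.2 := p.2.cast_nonneg
  simp only [Function.comp_apply]
  nlinarith

theorem far_field_upa_resolution (a b : ℝ)
    (ha : Real.sin (π * a) ≠ 0) (hb : Real.sin (π * b) ≠ 0)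
    (Δ : ℕ → ℕ → ℝ)
    (hΔ : ∀ M N : ℕ, Δ M N = (1 / ((2 * (M : ℝ) + 1) * (2 * (N : ℝ) + 1)) ^ 2) *
      ‖∑ m ∈ Finset.Icc (-(M : ℤ)) M, ∑ n ∈ Finset.Icc (-(N : ℤ)) N,
        Complex.exp (2 * π * Complex.I * (-a * m - b * n))‖ ^ 2) :
    (∀ M N : ℕ, Δ M N =
      Real.sin ((2 * (M : ℝ) + 1) * π * a) ^ 2 * Real.sin ((2 * (N : ℝ) + 1) * π * b) ^ 2 /
        ((2 * (M : ℝ) + 1) ^ 2 * (2 * (N : ℝ) + 1) ^ 2 *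
          Real.sin (π * a) ^ 2 * Real.sin (π * b) ^ 2)) ∧
    (∀ M N : ℕ, Δ M N ≤
      1 / ((2 * (M : ℝ) + 1) ^ 2 * (2 * (N : ℝ) + 1) ^ 2 *
        Real.sin (π * a) ^ 2 * Real.sin (π * b) ^ 2)) ∧
    Tendsto (fun p : ℕ × ℕ => Δ p.1 p.2)
      (Filter.comap (fun p : ℕ × ℕ => min p.1 p.2) atTop) (nhds 0) := by
  have formula : ∀ M N : ℕ, Δ M N =
      Real.sin ((2 * (M : ℝ) + 1) * π * a) ^ 2 * Real.sin ((2 * (N : ℝ) + 1) * π * b) ^ 2 /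
        ((2 * (M : ℝ) + 1) ^ 2 * (2 * (N : ℝ) + 1) ^ 2 *
          Real.sin (π * a) ^ 2 * Real.sin (π * b) ^ 2) := fun M N => by
    rw [hΔ, upa_array_factor_eq a b ha hb, Complex.norm_real, norm_eq_abs, sq_abs]
    field_simp
  have bound : ∀ M N : ℕ, Δ M N ≤
      1 / ((2 * (M : ℝ) + 1) ^ 2 * (2 * (N : ℝ) + 1) ^ 2 *
        Real.sin (π * a) ^ 2 * Real.sin (π * b) ^ 2) := fun M N => by
    rw [formula]
    gcongr
    exact mul_le_one₀ (sin_sq_le_one _) (sq_nonneg _) (sin_sq_le_one _)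
  refine ⟨formula, bound, ?_⟩
  have denominator : Tendsto (fun p : ℕ × ℕ => (2 * (p.1 : ℝ) + 1) ^ 2 * (2 * (p.2 : ℝ) + 1) ^ 2 *
      Real.sin (π * a) ^ 2 * Real.sin (π * b) ^ 2)
      (comap (fun p : ℕ × ℕ => min p.1 p.2) atTop) atTop :=
    (((tendsto_pow_atTop two_ne_zero).comp tendsto_odd_mul_odd_comap_min).atTop_mul_const
      (by positivity : 0 < Real.sin (π * a) ^ 2 * Real.sin (π * b) ^ 2)).congr fun p => by simp only [Function.comp_apply]; ring
  refine squeeze_zero (fun p => ?_) (fun p => bound p.1 p.2) ?_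
  · rw [hΔ]; positivity
  · simpa only [one_div, Function.comp_def] using tendsto_inv_atTop_zero.comp denominator
end
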